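/- Magic entropy of the T state: for |T⟩ = (|0⟩ + e^{iπ/4}|1⟩)/√2, the order-N α-Rényi magic entropy is ME_α^{(N)}(|T⟩⟨T|) = h_α((1/2)(1 − 2^{−N})), where h_α(x) = (1−α)^{-1} log(x^α + (1−x)^α) is the binary Rényi entropy. In particular, ME(|T⟩⟨T|) = h(1/4) with h the binary Shannon entropy. -/

import Mathlib

open Matrix Finset
open scoped ComplexOrder

variable {G : Type*} [AddCommGroup G] [Fintype G] [DecidableEq G]

/-- The key unitary of the `(m+1)`-fold qubit convolution, as a permutation of
computational basis labels: `(x₁,…,x_K) ↦ (Σᵢ xᵢ, x₂+x₁, …, x_K+x₁)`. -/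
def keyFun (m : ℕ) (t : Fin (m + 1) → G) : Fin (m + 1) → G :=
  fun i => if i = 0 then ∑ j, t j else t i + t 0

/-- The key unitary `V` (a permutation matrix built from CNOT gates). -/
def keyU (m : ℕ) : Matrix (Fin (m + 1) → G) (Fin (m + 1) → G) ℂ :=
  Matrix.of fun x y => if x = keyFun m y then 1 else 0

/-- The tensor product `ρ₁ ⊗ ⋯ ⊗ ρ_K` of `K = m+1` states. -/
def bigTensor (m : ℕ) (ρ : Fin (m + 1) → Matrix G G ℂ) :
    Matrix (Fin (m + 1) → G) (Fin (m + 1) → G) ℂ :=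
  Matrix.of fun x y => ∏ i, ρ i (x i) (y i)

/-- Partial trace over subsystems `2, …, K`, keeping the first subsystem. -/
noncomputable def ptraceFirst (m : ℕ)
    (M : Matrix (Fin (m + 1) → G) (Fin (m + 1) → G) ℂ) : Matrix G G ℂ :=
  Matrix.of fun a b =>
    ∑ r : {i : Fin (m + 1) // i ≠ 0} → G,
      M (fun i => if h : i = 0 then a else r ⟨i, h⟩)
        (fun i => if h : i = 0 then b else r ⟨i, h⟩)

/-- The `K = m+1`-fold quantum convolution
`⊠_K(ρ₁ ⊗ ⋯ ⊗ ρ_K) = Tr_{2,…,K}(V (ρ₁⊗⋯⊗ρ_K) V†)`. -/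
noncomputable def qconv (m : ℕ) (ρ : Fin (m + 1) → Matrix G G ℂ) : Matrix G G ℂ :=
  ptraceFirst m (keyU m * bigTensor m ρ * (keyU m)ᴴ)

/-- A quantum state: positive semidefinite with unit trace. -/
def IsState (ρ : Matrix G G ℂ) : Prop := ρ.PosSemidef ∧ ρ.trace = 1

open scoped ENNReal

/-- The Rényi entropy `S_α` of a spectrum, `α ∈ [0,∞]`. -/
noncomputable def renyiEntropy {ι : Type*} [Fintype ι] (α : ℝ≥0∞)
    (lam : ι → ℝ) : ℝ :=
  if α = 1 then -∑ i, lam i * Real.log (lam i)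
  else if α = ⊤ then -Real.log (sSup (Set.range lam))
  else (1 - α.toReal)⁻¹ *
    Real.log (∑ i, if lam i = 0 then 0 else lam i ^ α.toReal)

/-- The binary `α`-Rényi entropy `h_α(x)`, with the usual limits at
`α = 1` (Shannon) and `α = ∞`. -/
noncomputable def binRenyi (α : ℝ≥0∞) (x : ℝ) : ℝ :=
  if α = 1 then -(x * Real.log x) - (1 - x) * Real.log (1 - x)
  else if α = ⊤ then -Real.log (max x (1 - x))
  else (1 - α.toReal)⁻¹ * Real.log (x ^ α.toReal + (1 - x) ^ α.toReal)

/-- The single-qubit `T` state `|T⟩ = (|0⟩ + e^{iπ/4}|1⟩)/√2`. -/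
noncomputable def Tvec : ZMod 2 → ℂ :=
  fun k => if k = 0 then (1 : ℂ) / Real.sqrt 2
    else Complex.exp (Real.pi * Complex.I / 4) / Real.sqrt 2

section Aux
namespace MagicTAux
open Matrix Finset

/-! ### ZMod 2 basics -/

lemma zmod2_add_self (x : ZMod 2) : x + x = 0 := by revert x; decide

lemma zmod2_cases (x : ZMod 2) : x = 0 ∨ x = 1 := by revert x; decide

lemma zmod2_sum {M : Type*} [AddCommMonoid M] (f : ZMod 2 → M) : ∑ i, f i = f 0 + f 1 := by
  have h : (univ : Finset (ZMod 2)) = {0, 1} := by decide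
  rw [h, Finset.sum_pair (by decide : (0 : ZMod 2) ≠ 1)]

lemma zmod2_range {M : Type*} (f : ZMod 2 → M) : Set.range f = {f 0, f 1} := by
  ext y
  constructor
  · rintro ⟨i, rfl⟩
    rcases zmod2_cases i with h | h <;> subst h
    · exact Set.mem_insert _ _
    · exact Set.mem_insert_iff.mpr (Or.inr rfl)
  · rintro (rfl | rfl)
    · exact ⟨0, rfl⟩
    · exact ⟨1, rfl⟩

/-! ### The inverse of the key permutation -/

noncomputable def gFun (m : ℕ) (t : Fin (m + 1) → ZMod 2) : Fin (m + 1) → ZMod 2 :=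
  fun i => if i = 0 then ∑ j, t j else t i + ∑ j, t j

lemma erase_card_fin (m : ℕ) : ((univ : Finset (Fin (m+1))).erase 0).card = m := by
  rw [Finset.card_erase_of_mem (mem_univ _), Finset.card_univ, Fintype.card_fin]; omega

lemma sum_keyFun (m : ℕ) (hm : Even m) (t : Fin (m+1) → ZMod 2) :
    ∑ j, keyFun m t j = t 0 := by
  rw [← Finset.add_sum_erase univ _ (mem_univ (0 : Fin (m+1)))]
  have h1 : keyFun m t 0 = ∑ j, t j := by simp [keyFun]
  have h2 : ∑ j ∈ univ.erase (0 : Fin (m+1)), keyFun m t j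
      = ∑ j ∈ univ.erase (0 : Fin (m+1)), (t j + t 0) := by
    refine Finset.sum_congr rfl fun j hj => ?_
    simp [keyFun, (Finset.mem_erase.mp hj).1]
  rw [h1, h2, Finset.sum_add_distrib, Finset.sum_const, erase_card_fin]
  have hsm : m • t 0 = 0 := by
    obtain ⟨k, hk⟩ := hm
    subst hk
    rw [add_nsmul, zmod2_add_self]
  rw [hsm, add_zero, ← Finset.add_sum_erase univ t (mem_univ (0 : Fin (m+1))),
    add_assoc, zmod2_add_self, add_zero]

lemma sum_gFun (m : ℕ) (hm : Even m) (t : Fin (m+1) → ZMod 2) :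
    ∑ j, gFun m t j = t 0 := by
  rw [← Finset.add_sum_erase univ _ (mem_univ (0 : Fin (m+1)))]
  have h1 : gFun m t 0 = ∑ j, t j := by simp [gFun]
  have h2 : ∑ j ∈ univ.erase (0 : Fin (m+1)), gFun m t j
      = ∑ j ∈ univ.erase (0 : Fin (m+1)), (t j + ∑ j, t j) := by
    refine Finset.sum_congr rfl fun j hj => ?_
    simp [gFun, (Finset.mem_erase.mp hj).1]
  rw [h1, h2, Finset.sum_add_distrib, Finset.sum_const, erase_card_fin]
  have hsm : m • (∑ j, t j) = 0 := by
    obtain ⟨k, hk⟩ := hm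
    subst hk
    rw [add_nsmul, zmod2_add_self]
  rw [hsm, add_zero, ← Finset.add_sum_erase univ t (mem_univ (0 : Fin (m+1))),
    add_assoc, zmod2_add_self, add_zero]

lemma keyFun_gFun (m : ℕ) (hm : Even m) (t : Fin (m+1) → ZMod 2) :
    keyFun m (gFun m t) = t := by
  funext i
  by_cases hi : i = 0
  · subst hi
    show keyFun m (gFun m t) 0 = t 0
    simp only [keyFun, if_pos rfl]
    exact sum_gFun m hm t
  · have h0 : gFun m t 0 = ∑ j, t j := if_pos rfl
    have hi' : gFun m t i = t i + ∑ j, t j := if_neg hi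
    simp only [keyFun, if_neg hi, hi', h0]
    rw [add_assoc, zmod2_add_self, add_zero]

lemma gFun_keyFun (m : ℕ) (hm : Even m) (t : Fin (m+1) → ZMod 2) :
    gFun m (keyFun m t) = t := by
  funext i
  by_cases hi : i = 0
  · subst hi
    show gFun m (keyFun m t) 0 = t 0
    simp only [gFun, if_pos rfl]
    exact sum_keyFun m hm t
  · simp only [gFun, if_neg hi]
    rw [sum_keyFun m hm t]
    simp only [keyFun, if_neg hi]
    rw [add_assoc, zmod2_add_self, add_zero]

lemma keyFun_eq_iff (m : ℕ) (hm : Even m) (x z : Fin (m+1) → ZMod 2) :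
    x = keyFun m z ↔ gFun m x = z := by
  constructor
  · rintro rfl; exact gFun_keyFun m hm z
  · rintro rfl; exact (keyFun_gFun m hm x).symm

/-! ### Conjugation by the key unitary -/

lemma sum_keyU_mul (m : ℕ) (hm : Even m) (x : Fin (m+1) → ZMod 2)
    (v : (Fin (m+1) → ZMod 2) → ℂ) :
    ∑ z, keyU m x z * v z = v (gFun m x) := by
  have h : ∀ z, keyU m x z * v z = if gFun m x = z then v z else 0 := by
    intro z
    simp only [keyU, Matrix.of_apply, keyFun_eq_iff m hm, ite_mul, one_mul, zero_mul]
  simp only [h, Finset.sum_ite_eq, mem_univ, if_pos]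

lemma sum_mul_keyU_conj (m : ℕ) (hm : Even m) (y : Fin (m+1) → ZMod 2)
    (u : (Fin (m+1) → ZMod 2) → ℂ) :
    ∑ w, u w * (keyU m)ᴴ w y = u (gFun m y) := by
  have h : ∀ w, u w * (keyU m)ᴴ w y = if gFun m y = w then u w else 0 := by
    intro w
    simp only [Matrix.conjTranspose_apply, keyU, Matrix.of_apply, keyFun_eq_iff m hm]
    split_ifs <;> simp
  simp only [h, Finset.sum_ite_eq, mem_univ, if_pos]

lemma conj_keyU_apply (m : ℕ) (hm : Even m) (ρ : Fin (m+1) → Matrix (ZMod 2) (ZMod 2) ℂ)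
    (x y : Fin (m+1) → ZMod 2) :
    (keyU (G := ZMod 2) m * bigTensor m ρ * (keyU (G := ZMod 2) m)ᴴ) x y
      = bigTensor m ρ (gFun m x) (gFun m y) := by
  rw [Matrix.mul_apply]
  have h1 : ∀ w, (keyU (G := ZMod 2) m * bigTensor m ρ) x w = bigTensor m ρ (gFun m x) w := by
    intro w
    rw [Matrix.mul_apply]
    exact sum_keyU_mul m hm x (fun z => bigTensor m ρ z w)
  simp only [h1]
  exact sum_mul_keyU_conj m hm y (fun w => bigTensor m ρ (gFun m x) w)

/-! ### Entrywise formula for the convolution of `2N+1` copies -/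

lemma subtype_iff (m : ℕ) : ∀ x : Fin (m+1), x ∈ univ.erase (0 : Fin (m+1)) ↔ x ≠ 0 := by
  intro x; simp [Finset.mem_erase]

lemma sum_ext (m : ℕ) (a : ZMod 2) (r : {i : Fin (m + 1) // i ≠ 0} → ZMod 2) :
    ∑ j, (fun i => if h : i = 0 then a else r ⟨i, h⟩) j = a + ∑ p, r p := by
  rw [← Finset.add_sum_erase univ _ (mem_univ (0 : Fin (m+1)))]
  congr 1
  rw [Finset.sum_subtype _ (subtype_iff m) (fun i => if h : i = 0 then a else r ⟨i, h⟩)]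
  refine Finset.sum_congr rfl fun p _ => ?_
  exact dif_neg p.2

noncomputable def Tmat : Matrix (ZMod 2) (ZMod 2) ℂ := Matrix.vecMulVec Tvec (star Tvec)

lemma Tmat_apply (u v : ZMod 2) : Tmat u v = Tvec u * star (Tvec v) := rfl

lemma qconv_apply (N : ℕ) (a b : ZMod 2) :
    qconv (2*N) (fun _ => Tmat) a b =
      ∑ r : {i : Fin (2*N + 1) // i ≠ 0} → ZMod 2,
        (Tmat (a + ∑ p, r p) (b + ∑ p, r p) *
          ∏ p, Tmat (r p + (a + ∑ p, r p)) (r p + (b + ∑ p, r p))) := by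
  have hm : Even (2*N) := even_two_mul N
  show ∑ r : {i : Fin (2*N + 1) // i ≠ 0} → ZMod 2, _ = _
  refine Finset.sum_congr rfl fun r _ => ?_
  rw [conj_keyU_apply _ hm]
  show ∏ i, Tmat (gFun (2*N) (fun i => if h : i = 0 then a else r ⟨i, h⟩) i)
      (gFun (2*N) (fun i => if h : i = 0 then b else r ⟨i, h⟩) i) = _
  have key0 : ∀ c : ZMod 2,
      gFun (2*N) (fun i => if h : i = 0 then c else r ⟨i, h⟩) 0 = c + ∑ p, r p := by
    intro c
    simp only [gFun, if_pos rfl]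
    exact sum_ext (2*N) c r
  have key : ∀ (c : ZMod 2) (i : Fin (2*N+1)) (h : i ≠ 0),
      gFun (2*N) (fun i => if h : i = 0 then c else r ⟨i, h⟩) i
        = r ⟨i, h⟩ + (c + ∑ p, r p) := by
    intro c i h
    simp only [gFun, if_neg h, dif_neg h]
    rw [sum_ext (2*N) c r]
  rw [← Finset.mul_prod_erase univ _ (mem_univ (0 : Fin (2*N+1)))]
  congr 1
  · rw [key0 a, key0 b]
  · rw [Finset.prod_subtype _ (subtype_iff (2*N))]
    refine Finset.prod_congr rfl fun p _ => ?_
    rw [key a p.1 p.2, key b p.1 p.2]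

end MagicTAux
end Aux

section Aux2
namespace MagicTAux
open Matrix Finset

/-! ### Numerical facts about the `T` state amplitudes -/

noncomputable def EE : ℂ := Complex.exp (Real.pi * Complex.I / 4)

lemma rt2_sq : ((Real.sqrt 2 : ℝ) : ℂ) * ((Real.sqrt 2 : ℝ) : ℂ) = 2 := by
  rw [← Complex.ofReal_mul, Real.mul_self_sqrt (by norm_num)]
  norm_num

lemma EE_mul_star : EE * star EE = 1 := by
  show Complex.exp _ * (starRingEnd ℂ) (Complex.exp _) = 1
  rw [← Complex.exp_conj, ← Complex.exp_add]
  have h : (starRingEnd ℂ) (Real.pi * Complex.I / 4) = -(Real.pi * Complex.I / 4) := by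
    simp [map_div₀, Complex.conj_I, Complex.conj_ofNat]; ring
  rw [h, add_neg_cancel, Complex.exp_zero]

lemma EE_sq : EE ^ 2 = Complex.I := by
  show Complex.exp _ ^ 2 = _
  rw [← Complex.exp_nat_mul]
  have h : ((2:ℕ) : ℂ) * (Real.pi * Complex.I / 4) = (Real.pi/2) * Complex.I := by
    push_cast; ring
  rw [h, Complex.exp_mul_I]
  have c : Complex.cos (Real.pi/2) = 0 := by
    rw [show ((Real.pi : ℂ)/2) = ((Real.pi/2 : ℝ) : ℂ) by push_cast; ring, ← Complex.ofReal_cos,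
      Real.cos_pi_div_two, Complex.ofReal_zero]
  have s : Complex.sin (Real.pi/2) = 1 := by
    rw [show ((Real.pi : ℂ)/2) = ((Real.pi/2 : ℝ) : ℂ) by push_cast; ring, ← Complex.ofReal_sin,
      Real.sin_pi_div_two, Complex.ofReal_one]
  rw [c, s, one_mul, zero_add]

lemma star_EE_sq : (star EE) ^ 2 = -Complex.I := by
  rw [← star_pow, EE_sq]
  exact Complex.conj_I

lemma Tvec_zero : Tvec 0 = 1 / (Real.sqrt 2 : ℝ) := if_pos rfl

lemma Tvec_one : Tvec 1 = EE / (Real.sqrt 2 : ℝ) := if_neg (by decide)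

lemma Tmat_diag (u : ZMod 2) : Tmat u u = 1/2 := by
  rcases zmod2_cases u with h | h <;> subst h <;>
    rw [Tmat_apply]
  · rw [Tvec_zero]
    rw [show star ((1 : ℂ) / (Real.sqrt 2 : ℝ)) = 1 / (Real.sqrt 2 : ℝ) by
      rw [star_div₀, star_one]; rw [show star ((Real.sqrt 2 : ℝ) : ℂ) = ((Real.sqrt 2 : ℝ) : ℂ) from
        Complex.conj_ofReal _]]
    rw [div_mul_div_comm, one_mul, rt2_sq]
  · rw [Tvec_one]
    rw [star_div₀, show star ((Real.sqrt 2 : ℝ) : ℂ) = ((Real.sqrt 2 : ℝ) : ℂ) from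
      Complex.conj_ofReal _]
    rw [div_mul_div_comm, EE_mul_star, rt2_sq]

/-- The off-diagonal coherence function `c(u) = ⟨u|ρT|u+1⟩`. -/
noncomputable def ccT : ZMod 2 → ℂ := fun u => Tmat u (u + 1)

lemma ccT_def (u : ZMod 2) : ccT u = Tmat u (u + 1) := rfl

lemma ccT_zero : ccT 0 = star EE / 2 := by
  rw [ccT_def, show ((0:ZMod 2) + 1) = 1 by decide, Tmat_apply, Tvec_zero, Tvec_one]
  rw [star_div₀, show star ((Real.sqrt 2 : ℝ) : ℂ) = ((Real.sqrt 2 : ℝ) : ℂ) from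
    Complex.conj_ofReal _]
  rw [div_mul_div_comm, one_mul, rt2_sq]

lemma ccT_one : ccT 1 = EE / 2 := by
  rw [ccT_def, show ((1:ZMod 2) + 1) = 0 by decide, Tmat_apply, Tvec_zero, Tvec_one]
  rw [show star ((1 : ℂ) / (Real.sqrt 2 : ℝ)) = 1 / (Real.sqrt 2 : ℝ) by
    rw [star_div₀, star_one]; rw [show star ((Real.sqrt 2 : ℝ) : ℂ) = ((Real.sqrt 2 : ℝ) : ℂ) from
      Complex.conj_ofReal _]]
  rw [div_mul_div_comm, rt2_sq, mul_one]

lemma PP_sq : (ccT 0 + ccT 1) ^ 2 = 1/2 := by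
  rw [ccT_zero, ccT_one]
  have h1 := EE_sq
  have h2 := star_EE_sq
  have h3 := EE_mul_star
  linear_combination (h2 + h1)/4 + h3/2

lemma QQ_sq : (ccT 0 - ccT 1) ^ 2 = -(1/2) := by
  rw [ccT_zero, ccT_one]
  have h1 := EE_sq
  have h2 := star_EE_sq
  have h3 := EE_mul_star
  linear_combination (h2 + h1)/4 - h3/2

lemma star_PP : star (ccT 0 + ccT 1) = ccT 0 + ccT 1 := by
  rw [ccT_zero, ccT_one]
  simp only [star_add, star_div₀, star_star, Complex.star_def, Complex.conj_conj, Complex.conj_ofNat]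
  ring

lemma star_QQ : star (ccT 0 - ccT 1) = -(ccT 0 - ccT 1) := by
  rw [ccT_zero, ccT_one]
  simp only [star_sub, star_div₀, star_star, Complex.star_def, Complex.conj_conj, Complex.conj_ofNat]
  ring

/-! ### The sign character on `ZMod 2` -/

noncomputable def chi : ZMod 2 → ℂ := fun u => if u = 0 then 1 else -1

lemma chi_zero : chi 0 = 1 := if_pos rfl
lemma chi_one : chi 1 = -1 := if_neg (by decide)

lemma chi_add (u v : ZMod 2) : chi (u + v) = chi u * chi v := by
  rcases zmod2_cases u with h | h <;> rcases zmod2_cases v with h' | h' <;> subst h <;> subst h' <;>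
    simp [chi_zero, chi_one, show ((0:ZMod 2)+0) = 0 by decide, show ((0:ZMod 2)+1) = 1 by decide,
      show ((1:ZMod 2)+0) = 1 by decide, show ((1:ZMod 2)+1) = 0 by decide, chi]

lemma chi_finsum {S : Type*} (t : Finset S) (f : S → ZMod 2) :
    chi (∑ p ∈ t, f p) = ∏ p ∈ t, chi (f p) := by
  classical
  induction t using Finset.cons_induction with
  | empty => simp [chi_zero]
  | cons a t ha ih => rw [Finset.sum_cons, Finset.prod_cons, chi_add, ih]

lemma ind_eq (u σ : ZMod 2) : (if u = σ then (1:ℂ) else 0) = (1 + chi σ * chi u)/2 := by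
  rcases zmod2_cases u with h | h <;> rcases zmod2_cases σ with h' | h' <;> subst h <;> subst h' <;>
    simp [chi_zero, chi_one, show (0:ZMod 2) ≠ 1 by decide, show (1:ZMod 2) ≠ 0 by decide] <;>
    norm_num

/-! ### Sum-product exchange -/

lemma sum_prod_fun {S : Type*} [Fintype S] [DecidableEq S] (g : ZMod 2 → ℂ) :
    ∑ r : S → ZMod 2, ∏ p, g (r p) = (g 0 + g 1) ^ Fintype.card S := by
  rw [← Fintype.prod_sum (fun (_ : S) (u : ZMod 2) => g u)]
  have h2 : ∑ u : ZMod 2, g u = g 0 + g 1 := zmod2_sum g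
  rw [Finset.prod_congr rfl (fun p _ => h2), Finset.prod_const, Finset.card_univ]

lemma card_sub (N : ℕ) : Fintype.card {i : Fin (2*N + 1) // i ≠ 0} = 2*N := by
  have h : Fintype.card {i : Fin (2*N + 1) // ¬ (i = 0)} = 2*N := by
    rw [Fintype.card_subtype_compl, Fintype.card_subtype_eq, Fintype.card_fin]; omega
  exact h

/-! ### Diagonal entries of the convolution -/

lemma qconv_diag (N : ℕ) (a : ZMod 2) :
    qconv (2*N) (fun _ => Tmat) a a = 1/2 := by
  rw [qconv_apply]
  have h : ∀ r : {i : Fin (2*N + 1) // i ≠ 0} → ZMod 2,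
      (Tmat (a + ∑ p, r p) (a + ∑ p, r p) *
        ∏ p, Tmat (r p + (a + ∑ p, r p)) (r p + (a + ∑ p, r p)))
        = (1/2 : ℂ) * (1/2) ^ (2*N) := by
    intro r
    rw [Tmat_diag]
    congr 1
    rw [Finset.prod_congr rfl (fun p _ => Tmat_diag _), Finset.prod_const, Finset.card_univ,
      card_sub]
  rw [Finset.sum_congr rfl (fun r _ => h r), Finset.sum_const, Finset.card_univ, Fintype.card_fun,
    card_sub, nsmul_eq_mul, ZMod.card]
  push_cast
  have hpow : ((2:ℂ))^(2*N) * ((1/2:ℂ))^(2*N) = 1 := by rw [← mul_pow]; norm_num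
  linear_combination ((1:ℂ)/2) * hpow

/-! ### The off-diagonal entry of the convolution -/

set_option maxHeartbeats 1000000 in
lemma qconv_offdiag (N : ℕ) :
    qconv (2*N) (fun _ => Tmat) 0 1
      = ((ccT 0 + ccT 1) ^ (2*N+1) + (ccT 0 - ccT 1) ^ (2*N+1)) / 2 := by
  rw [qconv_apply]
  -- Step 1: rewrite each summand in terms of `ccT`
  have h1 : ∀ r : {i : Fin (2*N + 1) // i ≠ 0} → ZMod 2,
      (Tmat ((0:ZMod 2) + ∑ p, r p) ((1:ZMod 2) + ∑ p, r p) *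
        ∏ p, Tmat (r p + ((0:ZMod 2) + ∑ p, r p)) (r p + ((1:ZMod 2) + ∑ p, r p)))
        = ccT (∑ p, r p) * ∏ p, ccT (r p + ∑ p, r p) := by
    intro r
    have e1 : Tmat ((0:ZMod 2) + ∑ p, r p) ((1:ZMod 2) + ∑ p, r p) = ccT (∑ p, r p) := by
      rw [ccT_def, zero_add, show ((∑ p, r p) + 1) = 1 + ∑ p, r p by ring]
    have e2 : ∀ p, Tmat (r p + ((0:ZMod 2) + ∑ q, r q)) (r p + ((1:ZMod 2) + ∑ q, r q))
        = ccT (r p + ∑ q, r q) := by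
      intro p
      rw [ccT_def, zero_add, show (r p + (∑ q, r q) + 1) = r p + (1 + ∑ q, r q) by ring]
    rw [e1, Finset.prod_congr rfl (fun p _ => e2 p)]
  rw [Finset.sum_congr rfl (fun r _ => h1 r)]
  -- Step 2: insert the indicator over the total parity σ
  have h2 : ∀ r : {i : Fin (2*N + 1) // i ≠ 0} → ZMod 2,
      ccT (∑ p, r p) * ∏ p, ccT (r p + ∑ p, r p)
        = ∑ σ : ZMod 2, (if (∑ p, r p) = σ then (1:ℂ) else 0) *
            (ccT σ * ∏ p, ccT (r p + σ)) := by
    intro r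
    rw [show (∑ σ : ZMod 2, (if (∑ p, r p) = σ then (1:ℂ) else 0) *
        (ccT σ * ∏ p, ccT (r p + σ)))
      = ∑ σ : ZMod 2, (if (∑ p, r p) = σ then ccT σ * ∏ p, ccT (r p + σ) else 0) by
        refine Finset.sum_congr rfl fun σ _ => ?_
        rw [ite_mul, one_mul, zero_mul]]
    rw [Finset.sum_ite_eq, if_pos (mem_univ _)]
  rw [Finset.sum_congr rfl (fun r _ => h2 r), Finset.sum_comm]
  -- Step 3: expand the indicator via the character χ and exchange sum and product
  have h3 : ∀ σ : ZMod 2,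
      (∑ r : {i : Fin (2*N + 1) // i ≠ 0} → ZMod 2,
        (if (∑ p, r p) = σ then (1:ℂ) else 0) * (ccT σ * ∏ p, ccT (r p + σ)))
      = (ccT σ / 2) * (ccT (0 + σ) + ccT (1 + σ)) ^ (2*N)
        + (ccT σ * chi σ / 2) * (chi 0 * ccT (0 + σ) + chi 1 * ccT (1 + σ)) ^ (2*N) := by
    intro σ
    have hterm : ∀ r : {i : Fin (2*N + 1) // i ≠ 0} → ZMod 2,
        (if (∑ p, r p) = σ then (1:ℂ) else 0) * (ccT σ * ∏ p, ccT (r p + σ))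
          = (ccT σ / 2) * ∏ p, ccT (r p + σ)
            + (ccT σ * chi σ / 2) * ∏ p, (chi (r p) * ccT (r p + σ)) := by
      intro r
      rw [ind_eq, chi_finsum, Finset.prod_mul_distrib]
      ring
    rw [Finset.sum_congr rfl (fun r _ => hterm r), Finset.sum_add_distrib,
      ← Finset.mul_sum, ← Finset.mul_sum,
      sum_prod_fun (fun u => ccT (u + σ)), sum_prod_fun (fun u => chi u * ccT (u + σ)),
      card_sub]
  rw [Finset.sum_congr rfl (fun σ _ => h3 σ), zmod2_sum]
  -- Step 4: explicit evaluation of the two σ-terms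
  rw [show ((0:ZMod 2) + 0) = 0 by decide, show ((1:ZMod 2) + 0) = 1 by decide,
    show ((0:ZMod 2) + 1) = 1 by decide, show ((1:ZMod 2) + 1) = 0 by decide,
    chi_zero, chi_one]
  rw [show ((1:ℂ) * ccT 1 + -1 * ccT 0) = -(ccT 0 - ccT 1) by ring,
    Even.neg_pow (even_two_mul N)]
  ring

end MagicTAux
end Aux2

section Aux4
namespace MagicTAux
open Matrix Finset

/-! ### Spectral facts -/

lemma trace_eq_sum_eig {n : Type*} [Fintype n] [DecidableEq n] {A : Matrix n n ℂ}
    (hA : A.IsHermitian) : A.trace = ∑ i, (hA.eigenvalues i : ℂ) := by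
  conv_lhs => rw [hA.spectral_theorem]
  rw [Unitary.conjStarAlgAut_apply, Matrix.trace_mul_cycle,
    (Matrix.mem_unitaryGroup_iff').mp (Matrix.IsHermitian.eigenvectorUnitary hA).2, Matrix.one_mul,
    Matrix.trace_diagonal]
  rfl

lemma trace_sq_eq_sum_eig_sq {n : Type*} [Fintype n] [DecidableEq n] {A : Matrix n n ℂ}
    (hA : A.IsHermitian) : (A * A).trace = ∑ i, ((hA.eigenvalues i : ℂ))^2 := by
  set U := (Matrix.IsHermitian.eigenvectorUnitary hA : Matrix n n ℂ) with hU
  set D := Matrix.diagonal ((RCLike.ofReal : ℝ → ℂ) ∘ hA.eigenvalues) with hD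
  have h1 : star U * U = 1 := (Matrix.mem_unitaryGroup_iff').mp
    (Matrix.IsHermitian.eigenvectorUnitary hA).2
  have hsq : A * A = U * (D * D) * star U := by
    conv_lhs => rw [hA.spectral_theorem]
    calc (U * D * star U) * (U * D * star U)
        = U * D * (star U * U) * D * star U := by
          simp only [Matrix.mul_assoc]
      _ = U * (D * D) * star U := by rw [h1]; simp only [Matrix.mul_assoc, Matrix.mul_one]
  rw [hsq, Matrix.trace_mul_cycle, h1, Matrix.one_mul,
    Matrix.diagonal_mul_diagonal, Matrix.trace_diagonal]
  refine Finset.sum_congr rfl fun i _ => ?_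
  simp [pow_two]

lemma trace_zmod2 (A : Matrix (ZMod 2) (ZMod 2) ℂ) : A.trace = A 0 0 + A 1 1 := by
  rw [Matrix.trace]
  exact zmod2_sum _

lemma mulself_trace (A : Matrix (ZMod 2) (ZMod 2) ℂ) :
    (A*A).trace = (A 0 0 * A 0 0 + A 0 1 * A 1 0) + (A 1 0 * A 0 1 + A 1 1 * A 1 1) := by
  rw [trace_zmod2, Matrix.mul_apply, Matrix.mul_apply, zmod2_sum, zmod2_sum]

end MagicTAux
end Aux4

section Aux5
namespace MagicTAux
open Matrix Finset
open scoped ENNReal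

lemma binRenyi_symm (α : ℝ≥0∞) (x : ℝ) : binRenyi α (1 - x) = binRenyi α x := by
  rw [binRenyi, binRenyi, sub_sub_cancel]
  split_ifs with hα hT
  · ring
  · rw [max_comm]
  · rw [add_comm]

lemma renyi_pair (α : ℝ≥0∞) (e : ZMod 2 → ℝ) (a : ℝ) (ha : a ≠ 0) (ha' : 1 - a ≠ 0)
    (h0 : e 0 = a) (h1 : e 1 = 1 - a) :
    renyiEntropy α e = binRenyi α a := by
  rw [renyiEntropy, binRenyi]
  split_ifs with hα hT
  · rw [zmod2_sum (fun i => e i * Real.log (e i)), h0, h1]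
    ring
  · rw [zmod2_range e, h0, h1, csSup_pair]
  · rw [zmod2_sum (fun i => if e i = 0 then (0:ℝ) else e i ^ α.toReal), h0, h1,
      if_neg ha, if_neg ha']

end MagicTAux
end Aux5

open MagicTAux

/-- **Magic entropy of the `T` state:** the order-`N` `α`-Rényi magic entropy
`ME_α^{(N)}(|T⟩⟨T|) = S_α(⊠_{2N+1}|T⟩⟨T|)` equals
`h_α((1/2)(1 − 2^{−N}))`.  (In particular, at `N = 1`, `α = 1` this is the
binary Shannon entropy `h(1/4)`.) -/
theorem magic_entropy_T_state (N : ℕ) (hN : 1 ≤ N) (α : ℝ≥0∞)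
    (hconv : (qconv (2 * N)
        (fun _ => Matrix.vecMulVec Tvec (star Tvec))).IsHermitian) :
    renyiEntropy α hconv.eigenvalues =
      binRenyi α ((1 / 2) * (1 - (2 : ℝ) ^ (-(N : ℤ)))) := by
  classical
  set e : ZMod 2 → ℝ := hconv.eigenvalues with he
  set t : ℝ := ((1:ℝ)/2)^N with ht
  -- entry values
  have h00 : (qconv (2 * N) (fun _ => Matrix.vecMulVec Tvec (star Tvec))) 0 0 = 1/2 :=
    qconv_diag N 0
  have h11 : (qconv (2 * N) (fun _ => Matrix.vecMulVec Tvec (star Tvec))) 1 1 = 1/2 :=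
    qconv_diag N 1
  have h01 : (qconv (2 * N) (fun _ => Matrix.vecMulVec Tvec (star Tvec))) 0 1
      = ((ccT 0 + ccT 1) ^ (2*N+1) + (ccT 0 - ccT 1) ^ (2*N+1)) / 2 :=
    qconv_offdiag N
  have hodd : Odd (2*N+1) := ⟨N, by ring⟩
  have h10 : (qconv (2 * N) (fun _ => Matrix.vecMulVec Tvec (star Tvec))) 1 0
      = ((ccT 0 + ccT 1) ^ (2*N+1) - (ccT 0 - ccT 1) ^ (2*N+1)) / 2 := by
    rw [← hconv.apply 1 0, h01, star_div₀, star_add, star_pow, star_pow, star_PP, star_QQ,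
      Odd.neg_pow hodd]
    rw [show star (2:ℂ) = 2 from by norm_num]
    ring
  have hPK : (((ccT 0 + ccT 1) ^ (2*N+1)))^2 = ((1:ℂ)/2)^(2*N+1) := by
    rw [← pow_mul, mul_comm ((2*N+1)) 2, pow_mul, PP_sq]
  have hQK : (((ccT 0 - ccT 1) ^ (2*N+1)))^2 = -(((1:ℂ)/2)^(2*N+1)) := by
    rw [← pow_mul, mul_comm ((2*N+1)) 2, pow_mul, QQ_sq, Odd.neg_pow hodd]
  have hprod : (qconv (2 * N) (fun _ => Matrix.vecMulVec Tvec (star Tvec))) 0 1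
      * (qconv (2 * N) (fun _ => Matrix.vecMulVec Tvec (star Tvec))) 1 0
      = ((1:ℂ)/2)^(2*N+1)/2 := by
    rw [h01, h10]
    linear_combination hPK/4 - hQK/4
  -- trace identities
  have htrC : (↑(e 0) : ℂ) + ↑(e 1) = 1 := by
    have h := trace_eq_sum_eig hconv
    rw [zmod2_sum (fun i => ((hconv.eigenvalues i : ℂ)))] at h
    rw [trace_zmod2, h00, h11] at h
    rw [he, ← h]
    norm_num
  have htr2C : (↑(e 0) : ℂ)^2 + (↑(e 1) : ℂ)^2 = 1/2 + ((1:ℂ)/2)^(2*N+1) := by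
    have h := trace_sq_eq_sum_eig_sq hconv
    rw [zmod2_sum (fun i => ((hconv.eigenvalues i : ℂ))^2)] at h
    rw [mulself_trace, h00, h11] at h
    rw [mul_comm ((qconv (2 * N) (fun _ => Matrix.vecMulVec Tvec (star Tvec))) 1 0)] at h
    rw [hprod] at h
    rw [he, ← h]
    ring
  have hs : e 0 + e 1 = 1 := by exact_mod_cast htrC
  have hq : e 0^2 + e 1^2 = 1/2 + ((1:ℝ)/2)^(2*N+1) := by
    have h2 : ((e 0^2 + e 1^2 : ℝ) : ℂ) = ((1/2 + ((1:ℝ)/2)^(2*N+1) : ℝ) : ℂ) := by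
      push_cast
      exact htr2C
    exact_mod_cast h2
  -- solve for the eigenvalues
  have he1 : e 1 = 1 - e 0 := by linarith
  have hpow21 : ((1:ℝ)/2)^(2*N+1) = t^2 * (1/2) := by
    rw [ht, pow_succ, mul_comm 2 N, pow_mul]
  rw [he1, hpow21] at hq
  have key : e 0 * (1 - e 0) = 1/4 - t^2/4 := by linear_combination (-1/2) * hq
  have hfac : (e 0 - (1 - t)/2) * (e 0 - (1 - (1 - t)/2)) = 0 := by
    linear_combination -key
  -- positivity of the two roots
  have ht0 : 0 < t := by rw [ht]; positivity
  have ht1 : t ≤ 1/2 := by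
    rw [ht]
    calc ((1:ℝ)/2)^N ≤ ((1:ℝ)/2)^1 :=
      pow_le_pow_of_le_one (by norm_num) (by norm_num) hN
    _ = 1/2 := by norm_num
  have hy : 0 < (1 - t)/2 := by linarith
  have hy' : 0 < 1 - (1 - t)/2 := by linarith
  have harg : (1 / 2) * (1 - (2 : ℝ) ^ (-(N : ℤ))) = (1 - t)/2 := by
    rw [ht, show (2:ℝ)^(-(N:ℤ)) = ((1:ℝ)/2)^N by
      rw [_root_.zpow_neg, zpow_natCast, one_div, inv_pow]]
    ring
  rw [harg]
  rcases mul_eq_zero.mp hfac with h | h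
  · have h0' : e 0 = (1 - t)/2 := by
      have := sub_eq_zero.mp h
      linarith
    have h1' : e 1 = 1 - (1 - t)/2 := by rw [he1, h0']
    exact renyi_pair α e _ (ne_of_gt hy) (ne_of_gt hy') h0' h1'
  · have h0' : e 0 = 1 - (1 - t)/2 := by
      have := sub_eq_zero.mp h
      linarith
    have h1' : e 1 = 1 - (1 - (1 - t)/2) := by rw [he1, h0']
    rw [← binRenyi_symm α ((1-t)/2)]
    refine renyi_pair α e _ (ne_of_gt hy') ?_ h0' h1'
    rw [sub_sub_cancel]
    exact ne_of_gt hy
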